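/- Let β > 0. For every α > 0: 0 < (1+α)·J(1; β/(1+α)) − J(1; β) < α ln 2, and 0 < sup_{t∈(0,1)} [α h(t) + J(r_{t,β}; β) − t ln r_{t,β}] − J(1; β) < α ln 2. (Equivalently, 0 < Λ_N(α) < α ln 2 and 0 < Λ_Z(α) < α ln 2 for α > 0.) -/

import Mathlib

/-- `J(r;γ) = ∫₀¹ ln(1 + r e^{−γx}) dx`. -/
noncomputable def Jint (r γ : ℝ) : ℝ :=
  ∫ x in (0:ℝ)..1, Real.log (1 + r * Real.exp (-γ * x))

/-- `r_{t,β} = (e^{βt} − 1)/(1 − e^{β(t−1)})`. -/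
noncomputable def rtβ (t β : ℝ) : ℝ :=
  (Real.exp (β * t) - 1) / (1 - Real.exp (β * (t - 1)))

/-- The binary entropy function (in nats). -/
noncomputable def binEnt (t : ℝ) : ℝ := -t * Real.log t - (1 - t) * Real.log (1 - t)


/-!
With `s = 1 + α` and `z = e^{−βx/s}`, `Λ_N(α)` is the integral over `[0,1]` of
`s log(1+z) − log(1+z^s)`, which lies strictly between `0` (Bernoulli: `1 + z^s < (1+z)^s`) and
`(s−1) log 2` (strict convexity of `z ↦ z^s`).

For `Λ_Z`, `v ↦ J(eᵛ;β)` is convex with derivative `T(eᵛ)`,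
`T(ρ) = (log(1+ρ) − log(1+ρe^{−β}))/β`, and `t ↦ r_{t,β}` inverts `T`; hence
`J(r_{t,β}) − t log r_{t,β} = min_ρ (J(ρ) − t log ρ)`. At `t⋆ = T(1)` one has `r_{t⋆,β} = 1`, so the
objective is `α h(t⋆) + J(1) > J(1)`. Conversely, taking `ρ = eᵘ` and maximising over `t` with the
Gibbs inequality gives `Λ_Z(α) ≤ α log(1+e^{−u/α}) + J(eᵘ) − J(1)` for every `u`; this bound equals
`α log 2` at `u = 0` with slope `t⋆ − 1/2 < 0`, so it is below `α log 2` for small `u > 0`.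
-/

open Real Set MeasureTheory intervalIntegral Topology

lemma log_one_add_sub_log_one_add_le {a b : ℝ} (ha : 0 < a) (hb : 0 < b) :
    log (1 + a) - log (1 + b) ≤ a / (1 + a) * (log a - log b) := by
  -- `(1 + b) / (1 + a)` is the mean of `1` and `b / a` with weights `1 / (1 + a)`, `a / (1 + a)`
  have hw₁ : (0 : ℝ) ≤ 1 / (1 + a) := by positivity
  have hw₂ : (0 : ℝ) ≤ a / (1 + a) := by positivity
  have h := strictConcaveOn_log_Ioi.concaveOn.2 (mem_Ioi.2 one_pos) (mem_Ioi.2 (div_pos hb ha))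
    hw₁ hw₂ (by field_simp)
  have hmean : 1 / (1 + a) * 1 + a / (1 + a) * (b / a) = (1 + b) / (1 + a) := by
    field_simp
  simp only [smul_eq_mul] at h
  rw [hmean, log_one, log_div hb.ne' ha.ne',
    log_div (by positivity) (by positivity)] at h
  linarith

lemma log_one_add_exp_neg_le (c : ℝ) : log (1 + exp (-c)) ≤ log 2 - c / (1 + exp c) := by
  have h := log_one_add_sub_log_one_add_le (exp_pos (-c)) one_pos
  have hw : exp (-c) / (1 + exp (-c)) = 1 / (1 + exp c) := by
    rw [exp_neg]; field_simp; ring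
  rw [hw, log_exp, log_one, one_add_one_eq_two, sub_zero, one_div_mul_eq_div, neg_div] at h
  linarith

lemma binEnt_eq_binEntropy : binEnt = binEntropy := by
  funext t
  simp only [binEnt, binEntropy, log_inv]
  ring

lemma binEnt_le_mul_add_log_one_add_exp_neg {t : ℝ} (ht₀ : 0 < t) (ht₁ : t < 1) (c : ℝ) :
    binEnt t ≤ t * c + log (1 + exp (-c)) := by
  have ht₁' : 0 < 1 - t := sub_pos.2 ht₁
  have h := strictConcaveOn_log_Ioi.concaveOn.2 (mem_Ioi.2 (div_pos (exp_pos (-c)) ht₀))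
    (mem_Ioi.2 (one_div_pos.2 ht₁')) ht₀.le ht₁'.le (add_sub_cancel t 1)
  have hmean : t * (exp (-c) / t) + (1 - t) * (1 / (1 - t)) = 1 + exp (-c) := by
    field_simp; ring
  simp only [smul_eq_mul] at h
  rw [hmean, log_div (exp_pos _).ne' ht₀.ne',
    log_div one_ne_zero ht₁'.ne', log_exp, log_one] at h
  unfold binEnt
  linarith

lemma continuous_log_one_add_mul_exp {r : ℝ} (hr : 0 ≤ r) (γ : ℝ) :
    Continuous fun x : ℝ => log (1 + r * exp (-γ * x)) :=
  (by fun_prop : Continuous fun x : ℝ => 1 + r * exp (-γ * x)).log fun x => by positivity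

/-- `r ∂J/∂r (r;γ) = ∫₀¹ r e^{−γx} / (1 + r e^{−γx}) dx`, in closed form. -/
noncomputable def JintLogDeriv (r γ : ℝ) : ℝ := (log (1 + r) - log (1 + r * exp (-γ))) / γ

lemma integral_div_one_add_mul_exp {r γ : ℝ} (hr : 0 ≤ r) (hγ : γ ≠ 0) :
    ∫ x in (0 : ℝ)..1, r * exp (-γ * x) / (1 + r * exp (-γ * x)) = JintLogDeriv r γ := by
  have hderiv : ∀ x ∈ uIcc (0 : ℝ) 1, HasDerivAt (fun x => -log (1 + r * exp (-γ * x)) / γ)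
      (r * exp (-γ * x) / (1 + r * exp (-γ * x))) x := by
    intro x _
    have hpos : 0 < 1 + r * exp (-γ * x) := by positivity
    have h : HasDerivAt (fun y => log (1 + r * exp (-γ * y)))
        (r * (exp (-γ * x) * -γ) / (1 + r * exp (-γ * x))) x := by
      simpa using ((((hasDerivAt_id x).const_mul (-γ)).exp.const_mul r).const_add 1).log hpos.ne'
    refine (h.neg.div_const γ).congr_deriv ?_
    field_simp
  have hcont : Continuous fun x : ℝ => r * exp (-γ * x) / (1 + r * exp (-γ * x)) :=
    (by fun_prop : Continuous fun x : ℝ => r * exp (-γ * x)).div (by fun_prop)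
      fun x => by positivity
  rw [integral_eq_sub_of_hasDerivAt hderiv (hcont.intervalIntegrable _ _), JintLogDeriv]
  simp only [mul_one, mul_zero, exp_zero]
  ring

lemma Jint_sub_Jint_le {r ρ γ : ℝ} (hr : 0 < r) (hρ : 0 < ρ) (hγ : γ ≠ 0) :
    Jint r γ - Jint ρ γ ≤ (log r - log ρ) * JintLogDeriv r γ := by
  have hpt : ∀ x ∈ Icc (0 : ℝ) 1,
      log (1 + r * exp (-γ * x)) - log (1 + ρ * exp (-γ * x))
        ≤ (log r - log ρ) * (r * exp (-γ * x) / (1 + r * exp (-γ * x))) := by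
    intro x _
    have h := log_one_add_sub_log_one_add_le (mul_pos hr (exp_pos (-γ * x)))
      (mul_pos hρ (exp_pos (-γ * x)))
    rw [log_mul hr.ne' (exp_ne_zero _), log_mul hρ.ne' (exp_ne_zero _),
      add_sub_add_right_eq_sub] at h
    linarith
  have hint := fun {s : ℝ} (hs : 0 ≤ s) =>
    (continuous_log_one_add_mul_exp hs γ).intervalIntegrable (μ := volume) 0 1
  rw [Jint, Jint, ← integral_sub (hint hr.le) (hint hρ.le), ← integral_div_one_add_mul_exp hr.le hγ,
    ← intervalIntegral.integral_const_mul]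
  refine integral_mono_on zero_le_one ((hint hr.le).sub (hint hρ.le)) ?_ hpt
  exact (by fun_prop : Continuous fun x : ℝ => r * exp (-γ * x)).div (by fun_prop)
      (fun x => by positivity) |>.const_mul _ |>.intervalIntegrable _ _

lemma rtβ_pos {t β : ℝ} (ht₀ : 0 < t) (ht₁ : t < 1) (hβ : 0 < β) : 0 < rtβ t β := by
  have h₁ : 1 < exp (β * t) := one_lt_exp_iff.2 (mul_pos hβ ht₀)
  have h₂ : exp (β * (t - 1)) < 1 := exp_lt_one_iff.2 (mul_neg_of_pos_of_neg hβ (by linarith))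
  exact div_pos (by linarith) (by linarith)

lemma exp_mul_sub_one (β t : ℝ) : exp (β * (t - 1)) = exp (β * t) * exp (-β) := by
  rw [← exp_add]; ring_nf

lemma JintLogDeriv_rtβ {t β : ℝ} (ht₀ : 0 < t) (ht₁ : t < 1) (hβ : 0 < β) :
    JintLogDeriv (rtβ t β) β = t := by
  have hr := rtβ_pos ht₀ ht₁ hβ
  have hden : 0 < 1 - exp (β * t) * exp (-β) := by
    rw [← exp_mul_sub_one, sub_pos, exp_lt_one_iff]; nlinarith
  have hsplit : 1 + rtβ t β = exp (β * t) * (1 + rtβ t β * exp (-β)) := by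
    rw [rtβ, exp_mul_sub_one]
    field_simp
    ring
  rw [JintLogDeriv, hsplit, log_mul (exp_ne_zero _) (by positivity), log_exp]
  field_simp
  ring

lemma rtβ_JintLogDeriv {r β : ℝ} (hr : 0 ≤ r) (hβ : β ≠ 0) : rtβ (JintLogDeriv r β) β = r := by
  have hE : exp (β * JintLogDeriv r β) = (1 + r) / (1 + r * exp (-β)) := by
    rw [JintLogDeriv, mul_div_cancel₀ _ hβ, exp_sub, exp_log (by positivity),
      exp_log (by positivity)]
  have hq : 1 - exp (-β) ≠ 0 := by
    rwa [sub_ne_zero, ne_comm, ne_eq, exp_eq_one_iff, neg_eq_zero]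
  rw [rtβ, exp_mul_sub_one, hE]
  have hpos : 0 < 1 + r * exp (-β) := by positivity
  have hnum : (1 + r) / (1 + r * exp (-β)) - 1 = r * (1 - exp (-β)) / (1 + r * exp (-β)) := by
    field_simp; ring
  have hden :
      1 - (1 + r) / (1 + r * exp (-β)) * exp (-β) = (1 - exp (-β)) / (1 + r * exp (-β)) := by
    field_simp; ring
  rw [hnum, hden, div_div_div_cancel_right₀ hpos.ne', mul_div_cancel_right₀ _ hq]

lemma JintLogDeriv_pos {r β : ℝ} (hr : 0 < r) (hβ : 0 < β) : 0 < JintLogDeriv r β := by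
  have : 1 + r * exp (-β) < 1 + r := by
    have := exp_lt_one_iff.2 (neg_lt_zero.2 hβ)
    nlinarith
  exact div_pos (sub_pos.2 (log_lt_log (by positivity) this)) hβ

lemma JintLogDeriv_one_lt_half {β : ℝ} (hβ : 0 < β) : JintLogDeriv 1 β < 1 / 2 := by
  -- `(1 + e^{-β}) e^{β/2} = 2 cosh (β/2) > 2`
  have hcosh : log 2 < log (1 + exp (-β)) + β / 2 := by
    have h : (1 + exp (-β)) * exp (β / 2) = 2 * cosh (β / 2) := by
      rw [cosh_eq, add_mul, one_mul, ← exp_add]; ring_nf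
    rw [← log_exp (β / 2), ← log_mul (by positivity) (exp_ne_zero _), h]
    exact log_lt_log two_pos (by linarith [one_lt_cosh.2 (half_pos hβ).ne'])
  rw [JintLogDeriv, one_mul, div_lt_iff₀ hβ, one_add_one_eq_two]
  linarith

lemma Jint_rtβ_sub_mul_log_le {t β ρ : ℝ} (ht₀ : 0 < t) (ht₁ : t < 1) (hβ : 0 < β) (hρ : 0 < ρ) :
    Jint (rtβ t β) β - t * log (rtβ t β) ≤ Jint ρ β - t * log ρ := by
  have h := Jint_sub_Jint_le (rtβ_pos ht₀ ht₁ hβ) hρ hβ.ne'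
  rw [JintLogDeriv_rtβ ht₀ ht₁ hβ] at h
  linarith

lemma scgf_objective_le {α β t : ℝ} (hα : 0 < α) (hβ : 0 < β) (ht₀ : 0 < t) (ht₁ : t < 1)
    (u : ℝ) :
    α * binEnt t + Jint (rtβ t β) β - t * log (rtβ t β)
      ≤ Jint 1 β + α * log 2 + u * (JintLogDeriv (exp u) β - 1 / (1 + exp (u / α))) := by
  have hLegendre := Jint_rtβ_sub_mul_log_le ht₀ ht₁ hβ (exp_pos u)
  have hGibbs := binEnt_le_mul_add_log_one_add_exp_neg ht₀ ht₁ (u / α)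
  have hsoftplus := log_one_add_exp_neg_le (u / α)
  have hconvex := Jint_sub_Jint_le (exp_pos u) one_pos hβ.ne'
  rw [log_exp] at hLegendre hconvex
  rw [log_one, sub_zero] at hconvex
  have hαGibbs : α * binEnt t ≤ t * u + α * log (1 + exp (-(u / α))) := by
    have := mul_le_mul_of_nonneg_left hGibbs hα.le
    rwa [mul_add, mul_left_comm, mul_div_cancel₀ _ hα.ne'] at this
  have hαsoftplus : α * log (1 + exp (-(u / α))) ≤ α * log 2 - u / (1 + exp (u / α)) := by
    have := mul_le_mul_of_nonneg_left hsoftplus hα.le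
    rwa [mul_sub, mul_div_assoc', mul_div_cancel₀ _ hα.ne'] at this
  have : u * (JintLogDeriv (exp u) β - 1 / (1 + exp (u / α)))
      = u * JintLogDeriv (exp u) β - u / (1 + exp (u / α)) := by ring
  linarith

lemma exists_pos_JintLogDeriv_exp_lt {α β : ℝ} (hβ : 0 < β) :
    ∃ u > 0, JintLogDeriv (exp u) β < 1 / (1 + exp (u / α)) := by
  have hcont : Continuous fun u => JintLogDeriv (exp u) β - 1 / (1 + exp (u / α)) := by
    have h₁ : Continuous fun u => log (1 + exp u) :=
      (by fun_prop : Continuous fun u => 1 + exp u).log fun u => by positivity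
    have h₂ : Continuous fun u => log (1 + exp u * exp (-β)) :=
      (by fun_prop : Continuous fun u => 1 + exp u * exp (-β)).log fun u => by positivity
    exact ((h₁.sub h₂).div_const β).sub
      ((continuous_const.div (by fun_prop)) fun u => by positivity)
  have h₀ : JintLogDeriv (exp 0) β - 1 / (1 + exp (0 / α)) < 0 := by
    rw [zero_div, exp_zero, one_add_one_eq_two, sub_neg]
    exact JintLogDeriv_one_lt_half hβ
  obtain ⟨u, hu, hupos⟩ := ((hcont.tendsto 0).eventually (gt_mem_nhds h₀)
    |>.filter_mono nhdsWithin_le_nhds |>.and self_mem_nhdsWithin).exists (f := 𝓝[>] (0 : ℝ))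
  exact ⟨u, hupos, sub_neg.1 hu⟩

lemma log_one_add_rpow_lt_mul_log_one_add {s z : ℝ} (hs : 1 < s) (hz₀ : 0 < z) (hz₁ : z ≤ 1) :
    log (1 + z ^ s) < s * log (1 + z) := by
  have hzs : z ^ s ≤ z := by simpa using rpow_le_rpow_of_exponent_ge hz₀ hz₁ hs.le
  have hBernoulli : 1 + s * z ≤ (1 + z) ^ s := one_add_mul_self_le_rpow_one_add (by linarith) hs.le
  rw [← log_rpow (by positivity)]
  exact log_lt_log (by positivity) (by nlinarith)

lemma mul_log_one_add_lt {s z : ℝ} (hs : 1 < s) (hz₀ : 0 ≤ z) (hz₁ : z ≠ 1) :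
    s * log (1 + z) < (s - 1) * log 2 + log (1 + z ^ s) := by
  have h := (strictConvexOn_rpow hs).2 (mem_Ici.2 zero_le_one) (mem_Ici.2 hz₀) hz₁.symm
    (by norm_num : (0 : ℝ) < 1 / 2) (by norm_num : (0 : ℝ) < 1 / 2) (by norm_num)
  simp only [smul_eq_mul, one_rpow, mul_one] at h
  have hmid : 1 + z = 2 * (1 / 2 + 1 / 2 * z) := by ring
  have hmean : 1 + z ^ s = 2 * (1 / 2 + 1 / 2 * z ^ s) := by ring
  rw [hmid, hmean, log_mul two_ne_zero (by positivity), log_mul two_ne_zero (by positivity),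
    mul_add]
  have := log_lt_log (by positivity) h
  rw [log_rpow (by positivity)] at this
  linarith

lemma one_add_mul_Jint_sub_Jint_eq_integral {α β : ℝ} (hα : -1 < α) :
    (1 + α) * Jint 1 (β / (1 + α)) - Jint 1 β
      = ∫ x in (0 : ℝ)..1, ((1 + α) * log (1 + exp (-(β / (1 + α)) * x))
          - log (1 + exp (-(β / (1 + α)) * x) ^ (1 + α))) := by
  have hα' : 1 + α ≠ 0 := by linarith
  have hpow : ∀ x, exp (-(β / (1 + α)) * x) ^ (1 + α) = exp (-β * x) := by
    intro x
    rw [← exp_mul]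
    field_simp
  have hint : ∀ γ, IntervalIntegrable (fun x => log (1 + exp (-γ * x))) volume 0 1 := fun γ =>
    (by simpa using continuous_log_one_add_mul_exp zero_le_one γ : Continuous _)
      |>.intervalIntegrable _ _
  simp only [hpow]
  rw [integral_sub ((hint _).const_mul _) (hint _), intervalIntegral.integral_const_mul]
  simp only [Jint, one_mul]

lemma exp_neg_div_one_add_mul_mem_Ioo {α β x : ℝ} (hα : 0 < α) (hβ : 0 < β) (hx : 0 < x) :
    exp (-(β / (1 + α)) * x) ∈ Ioo 0 1 :=
  ⟨exp_pos _, exp_lt_one_iff.2 (mul_neg_of_neg_of_pos (neg_neg_of_pos (by positivity)) hx)⟩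

lemma continuous_LambdaN_integrand (α β : ℝ) :
    Continuous fun x => (1 + α) * log (1 + exp (-(β / (1 + α)) * x))
      - log (1 + exp (-(β / (1 + α)) * x) ^ (1 + α)) := by
  refine .sub (.mul continuous_const (.log (by fun_prop) fun x => by positivity))
    (.log ?_ fun x => by positivity)
  exact continuous_const.add
    ((by fun_prop : Continuous fun x => exp (-(β / (1 + α)) * x)).rpow_const
      fun x => Or.inl (exp_ne_zero _))

lemma one_add_mul_Jint_sub_Jint_pos {α β : ℝ} (hα : 0 < α) (hβ : 0 < β) :
    0 < (1 + α) * Jint 1 (β / (1 + α)) - Jint 1 β := by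
  rw [one_add_mul_Jint_sub_Jint_eq_integral (by linarith)]
  refine intervalIntegral_pos_of_pos_on
    ((continuous_LambdaN_integrand α β).intervalIntegrable _ _) (fun x hx => ?_) one_pos
  obtain ⟨hz₀, hz₁⟩ := exp_neg_div_one_add_mul_mem_Ioo hα hβ hx.1
  exact sub_pos.2 (log_one_add_rpow_lt_mul_log_one_add (by linarith) hz₀ hz₁.le)

lemma one_add_mul_Jint_sub_Jint_lt {α β : ℝ} (hα : 0 < α) (hβ : 0 < β) :
    (1 + α) * Jint 1 (β / (1 + α)) - Jint 1 β < α * log 2 := by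
  have hint := (continuous_LambdaN_integrand α β).intervalIntegrable (μ := volume) 0 1
  rw [one_add_mul_Jint_sub_Jint_eq_integral (by linarith), ← sub_pos]
  have hpos : 0 < ∫ x in (0 : ℝ)..1, (α * log 2 - ((1 + α) * log (1 + exp (-(β / (1 + α)) * x))
      - log (1 + exp (-(β / (1 + α)) * x) ^ (1 + α)))) := by
    refine intervalIntegral_pos_of_pos_on (intervalIntegrable_const.sub hint) (fun x hx => ?_)
      one_pos
    obtain ⟨hz₀, hz₁⟩ := exp_neg_div_one_add_mul_mem_Ioo hα hβ hx.1
    have h := mul_log_one_add_lt (by linarith : 1 < 1 + α) hz₀.le hz₁.ne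
    rw [add_sub_cancel_left] at h
    linarith
  rwa [integral_sub intervalIntegrable_const hint, intervalIntegral.integral_const, sub_zero,
    one_smul] at hpos

lemma exists_pos_forall_scgf_objective_le {α β : ℝ} (hα : 0 < α) (hβ : 0 < β) :
    ∃ δ > 0, ∀ t ∈ Ioo (0 : ℝ) 1,
      α * binEnt t + Jint (rtβ t β) β - t * log (rtβ t β) ≤ Jint 1 β + α * log 2 - δ := by
  obtain ⟨u, hu, hlt⟩ := exists_pos_JintLogDeriv_exp_lt (α := α) hβ
  refine ⟨u * (1 / (1 + exp (u / α)) - JintLogDeriv (exp u) β), mul_pos hu (sub_pos.2 hlt),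
    fun t ht => ?_⟩
  have := scgf_objective_le hα hβ ht.1 ht.2 u
  linarith

theorem scgf_slope_bounds (β : ℝ) (hβ : 0 < β) :
    ∀ α : ℝ, 0 < α →
      (0 < (1 + α) * Jint 1 (β / (1 + α)) - Jint 1 β ∧
        (1 + α) * Jint 1 (β / (1 + α)) - Jint 1 β < α * Real.log 2) ∧
      (0 < (⨆ t : Set.Ioo (0:ℝ) 1,
            (α * binEnt t + Jint (rtβ t β) β - (t : ℝ) * Real.log (rtβ t β)))
          - Jint 1 β ∧
        (⨆ t : Set.Ioo (0:ℝ) 1,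
            (α * binEnt t + Jint (rtβ t β) β - (t : ℝ) * Real.log (rtβ t β)))
          - Jint 1 β < α * Real.log 2) := by
  intro α hα
  obtain ⟨δ, hδ, hle⟩ := exists_pos_forall_scgf_objective_le hα hβ
  have : Nonempty (Ioo (0 : ℝ) 1) := nonempty_Ioo_subtype zero_lt_one
  have hbdd : BddAbove (range fun t : Ioo (0 : ℝ) 1 =>
      α * binEnt t + Jint (rtβ t β) β - (t : ℝ) * log (rtβ t β)) :=
    ⟨_, forall_mem_range.2 fun t => hle t t.2⟩
  -- at `t⋆ = JintLogDeriv 1 β` we have `r_{t⋆,β} = 1`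
  have htstar : JintLogDeriv 1 β ∈ Ioo (0 : ℝ) 1 :=
    ⟨JintLogDeriv_pos one_pos hβ, (JintLogDeriv_one_lt_half hβ).trans (by norm_num)⟩
  have hlow := le_ciSup hbdd ⟨_, htstar⟩
  simp only [rtβ_JintLogDeriv zero_le_one hβ.ne', log_one, mul_zero, sub_zero] at hlow
  have hent : 0 < binEnt (JintLogDeriv 1 β) :=
    binEnt_eq_binEntropy ▸ binEntropy_pos htstar.1 htstar.2
  refine ⟨⟨one_add_mul_Jint_sub_Jint_pos hα hβ, one_add_mul_Jint_sub_Jint_lt hα hβ⟩, ?_, ?_⟩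
  · linarith [mul_pos hα hent]
  · linarith [ciSup_le fun t : Ioo (0 : ℝ) 1 => hle t t.2]
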